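/- There exists a constant C₁ > 0 such that for every p ≥ 2 and every integer k with p/2 < k < p, the quantity b(p,k) = 2·Z(p-k+1)·Z(k)/Z(p) satisfies b(p,k) ≤ C₁·p^{5/2}/(k·(p-k))^{5/2}. -/
import Mathlib


/-- `Z(1) = (2-√3)/4` and `Z(p) = 6^p·(2p-5)!!/(8√3·p!)` for `p ≥ 2`. -/
noncomputable def Zfun : ℕ → ℝ := fun p =>
  if p = 1 then (2 - Real.sqrt 3) / 4
  else 6 ^ p * Nat.doubleFactorial (2 * p - 5) / (8 * Real.sqrt 3 * Nat.factorial p)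

noncomputable def rr (n : ℕ) : ℝ :=
  6 ^ n * Nat.doubleFactorial (2 * n - 5) / Nat.factorial n

lemma rr_pos (n : ℕ) : 0 < rr n := by
  unfold rr
  apply div_pos
  · apply mul_pos (by positivity)
    exact_mod_cast Nat.doubleFactorial_pos _
  · exact_mod_cast Nat.factorial_pos n

lemma rr_rec (n : ℕ) (hn : 2 ≤ n) :
    rr (n + 1) = rr n * (6 * (2 * (n : ℝ) - 3)) / ((n : ℝ) + 1) := by
  have hd : Nat.doubleFactorial (2 * (n + 1) - 5)
      = (2 * n - 3) * Nat.doubleFactorial (2 * n - 5) := by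
    match n, hn with
    | 2, _ => rfl
    | (m + 3), _ =>
      have e1 : 2 * (m + 3 + 1) - 5 = (2 * m + 1) + 2 := by omega
      have e2 : 2 * (m + 3) - 5 = 2 * m + 1 := by omega
      have e3 : 2 * (m + 3) - 3 = (2 * m + 1) + 2 := by omega
      rw [e1, e2, e3, Nat.doubleFactorial_add_two]
  have h3 : ((2 * n - 3 : ℕ) : ℝ) = 2 * (n : ℝ) - 3 := by
    have h : 3 ≤ 2 * n := by omega
    push_cast [h]
    ring
  unfold rr
  rw [hd, Nat.factorial_succ, pow_succ]
  push_cast [h3]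
  have hf : ((Nat.factorial n : ℕ) : ℝ) ≠ 0 := by exact_mod_cast (Nat.factorial_pos n).ne'
  field_simp

lemma rr_upper (n : ℕ) (hn : 2 ≤ n) :
    rr n * ((n : ℝ) ^ 2 * Real.sqrt n) ≤ 12 ^ n := by
  induction n, hn using Nat.le_induction with
  | base =>
      have h2 : rr 2 = 18 := by
        unfold rr
        norm_num [Nat.doubleFactorial]
      rw [h2]
      have hs : Real.sqrt 2 ≤ 2 := by
        nlinarith [Real.sq_sqrt (by norm_num : (0:ℝ) ≤ 2), Real.sqrt_nonneg 2]
      push_cast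
      nlinarith [Real.sqrt_nonneg 2]
  | succ n hn ih =>
      have hn2 : (2 : ℝ) ≤ n := by exact_mod_cast hn
      have hrr := (rr_pos n).le
      have hs := Real.sqrt_nonneg (n : ℝ)
      have hs1 := Real.sqrt_nonneg ((n : ℝ) + 1)
      have key : (2 * (n:ℝ) - 3) * ((n:ℝ) + 1) * Real.sqrt ((n:ℝ) + 1)
          ≤ 2 * (n:ℝ) ^ 2 * Real.sqrt n := by
        have ha : (0:ℝ) ≤ (2 * (n:ℝ) - 3) * ((n:ℝ) + 1) := by nlinarith
        have h1 : (2 * (n:ℝ) - 3) * ((n:ℝ) + 1) * Real.sqrt ((n:ℝ) + 1)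
            = Real.sqrt (((2 * (n:ℝ) - 3) * ((n:ℝ) + 1)) ^ 2 * ((n:ℝ) + 1)) := by
          rw [Real.sqrt_mul (by positivity), Real.sqrt_sq ha]
        have h2 : 2 * (n:ℝ) ^ 2 * Real.sqrt (n:ℝ)
            = Real.sqrt ((2 * (n:ℝ) ^ 2) ^ 2 * (n:ℝ)) := by
          rw [Real.sqrt_mul (by positivity), Real.sqrt_sq (by positivity)]
        rw [h1, h2]
        apply Real.sqrt_le_sqrt
        nlinarith [sq_nonneg ((n:ℝ) - 2), sq_nonneg (n:ℝ)]
      rw [rr_rec n hn]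
      push_cast
      have heq : rr n * (6 * (2 * (n:ℝ) - 3)) / ((n:ℝ) + 1) * (((n:ℝ) + 1) ^ 2 * Real.sqrt ((n:ℝ) + 1))
          = rr n * ((2 * (n:ℝ) - 3) * ((n:ℝ) + 1) * Real.sqrt ((n:ℝ) + 1)) * 6 := by
        have : (n:ℝ) + 1 ≠ 0 := by positivity
        field_simp
      rw [heq]
      calc rr n * ((2 * (n:ℝ) - 3) * ((n:ℝ) + 1) * Real.sqrt ((n:ℝ) + 1)) * 6
          ≤ rr n * (2 * (n:ℝ) ^ 2 * Real.sqrt n) * 6 := by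
            apply mul_le_mul_of_nonneg_right _ (by norm_num)
            exact mul_le_mul_of_nonneg_left key hrr
        _ = 12 * (rr n * ((n:ℝ) ^ 2 * Real.sqrt n)) := by ring
        _ ≤ 12 * 12 ^ n := by linarith
        _ = 12 ^ (n + 1) := by ring

lemma rr_ratio (k : ℕ) (hk : 2 ≤ k) (m : ℕ) :
    rr k * 12 ^ m ≤ rr (k + m) * (1 + 5 / (2 * (k:ℝ) - 3)) ^ m := by
  induction m with
  | zero => simp
  | succ m ih =>
      have hk2 : (2:ℝ) ≤ k := by exact_mod_cast hk
      have hc : (0:ℝ) < 2 * (k:ℝ) - 3 := by linarith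
      have hkm : 2 ≤ k + m := by omega
      have hcast : ((k + m : ℕ) : ℝ) = (k:ℝ) + m := by push_cast; ring
      have hnk : (k:ℝ) ≤ (k:ℝ) + m := by
        have : (0:ℝ) ≤ m := Nat.cast_nonneg m
        linarith
      have hkm1 : (0:ℝ) < (k:ℝ) + (m:ℝ) + 1 := by linarith
      have key : (12:ℝ) ≤ 6 * (2 * ((k:ℝ) + m) - 3) / ((k:ℝ) + m + 1) * (1 + 5 / (2 * (k:ℝ) - 3)) := by
        rw [div_mul_eq_mul_div, le_div_iff₀ hkm1]
        have h5 : (1 : ℝ) + 5 / (2 * (k:ℝ) - 3) = (2 * (k:ℝ) + 2) / (2 * (k:ℝ) - 3) := by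
          field_simp
          ring
        rw [h5, ← sub_nonneg]
        have hgoal : 6 * (2 * ((k:ℝ) + m) - 3) * ((2 * (k:ℝ) + 2) / (2 * (k:ℝ) - 3)) - 12 * ((k:ℝ) + m + 1)
            = (60 * (m:ℝ)) / (2 * (k:ℝ) - 3) := by
          field_simp
          ring
        rw [hgoal]
        positivity
      have hrec : rr (k + (m + 1)) = rr (k + m) * (6 * (2 * ((k:ℝ) + m) - 3)) / (((k:ℝ) + m) + 1) := by
        have e : k + (m + 1) = (k + m) + 1 := by ring
        rw [e, rr_rec (k + m) hkm, hcast]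
      rw [hrec]
      have hpos : 0 ≤ rr (k + m) * (1 + 5 / (2 * (k:ℝ) - 3)) ^ m := by
        apply mul_nonneg (rr_pos _).le
        positivity
      calc rr k * 12 ^ (m + 1) = (rr k * 12 ^ m) * 12 := by ring
        _ ≤ (rr (k + m) * (1 + 5 / (2 * (k:ℝ) - 3)) ^ m) * 12 :=
            mul_le_mul_of_nonneg_right ih (by norm_num)
        _ ≤ (rr (k + m) * (1 + 5 / (2 * (k:ℝ) - 3)) ^ m)
            * (6 * (2 * ((k:ℝ) + m) - 3) / ((k:ℝ) + m + 1) * (1 + 5 / (2 * (k:ℝ) - 3))) :=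
            mul_le_mul_of_nonneg_left key hpos
        _ = rr (k + m) * (6 * (2 * ((k:ℝ) + m) - 3)) / (((k:ℝ) + m) + 1)
            * (1 + 5 / (2 * (k:ℝ) - 3)) ^ (m + 1) := by
            rw [pow_succ]
            field_simp

lemma pow_le_exp5 (k m : ℕ) (hk : 2 ≤ k) (hm : m ≤ 2 * k - 3) :
    (1 + 5 / (2 * (k:ℝ) - 3)) ^ m ≤ Real.exp 5 := by
  have hk2 : (2:ℝ) ≤ k := by exact_mod_cast hk
  have hc : (0:ℝ) < 2 * (k:ℝ) - 3 := by linarith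
  have h1 : 1 + 5 / (2 * (k:ℝ) - 3) ≤ Real.exp (5 / (2 * (k:ℝ) - 3)) := by
    have := Real.add_one_le_exp (5 / (2 * (k:ℝ) - 3))
    linarith
  calc (1 + 5 / (2 * (k:ℝ) - 3)) ^ m ≤ (Real.exp (5 / (2 * (k:ℝ) - 3))) ^ m :=
        pow_le_pow_left₀ (by positivity) h1 m
    _ = Real.exp (m * (5 / (2 * (k:ℝ) - 3))) := (Real.exp_nat_mul _ m).symm
    _ ≤ Real.exp 5 := by
        apply Real.exp_le_exp.mpr
        rw [mul_div_assoc', div_le_iff₀ hc]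
        have hmr : (m:ℝ) ≤ 2 * (k:ℝ) - 3 := by
          have : ((m:ℕ):ℝ) ≤ ((2 * k - 3 : ℕ):ℝ) := by exact_mod_cast hm
          have h3 : ((2 * k - 3 : ℕ):ℝ) = 2 * (k:ℝ) - 3 := by
            have : 3 ≤ 2 * k := by omega
            push_cast [this]; ring
          linarith [h3 ▸ this]
        nlinarith

lemma rpow_five_half (x : ℝ) (hx : 0 < x) :
    x ^ ((5:ℝ)/2) = x ^ 2 * Real.sqrt x := by
  rw [show (5:ℝ)/2 = (2:ℝ) + 1/2 by norm_num, Real.rpow_add hx,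
    Real.sqrt_eq_rpow, show (2:ℝ) = ((2:ℕ):ℝ) by norm_num, Real.rpow_natCast]


lemma Zfun_eq (n : ℕ) (hn : n ≠ 1) : Zfun n = rr n / (8 * Real.sqrt 3) := by
  unfold Zfun rr
  rw [if_neg hn]
  ring

/-- There is a constant `C₁ > 0` such that for every `p ≥ 2` and every integer `k` with
`p/2 < k < p`, `b(p,k) = 2·Z(p-k+1)·Z(k)/Z(p) ≤ C₁·p^{5/2}/(k(p-k))^{5/2}`. -/
theorem transition_upper_bound :
    ∃ C₁ : ℝ, 0 < C₁ ∧ ∀ p : ℕ, 2 ≤ p → ∀ k : ℕ, (p : ℝ) / 2 < (k : ℝ) → k < p →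
      2 * Zfun (p - k + 1) * Zfun k / Zfun p ≤
        C₁ * (p : ℝ) ^ ((5 : ℝ) / 2) / ((k : ℝ) * ((p : ℝ) - (k : ℝ))) ^ ((5 : ℝ) / 2) := by
  have h3 : (0:ℝ) < Real.sqrt 3 := Real.sqrt_pos.mpr (by norm_num)
  refine ⟨Real.sqrt 3 * Real.exp 5, by positivity, ?_⟩
  intro p hp k hk1 hk2
  have hpk : p < 2 * k := by
    have : (p:ℝ) < 2 * k := by linarith
    exact_mod_cast this
  have hk2' : 2 ≤ k := by omega
  set m := p - k with hm
  have hm1 : 1 ≤ m := by omega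
  have hpm : p = k + m := by omega
  have hm_le : m ≤ 2 * k - 3 := by omega
  have hmk : 2 ≤ m + 1 := by omega
  -- real cast facts
  have hmr1 : (1:ℝ) ≤ m := by exact_mod_cast hm1
  have hkr : (2:ℝ) ≤ k := by exact_mod_cast hk2'
  have hkp : (k:ℝ) ≤ p := by exact_mod_cast hk2.le
  have hpkm : (p:ℝ) - k = m := by
    rw [hpm]; push_cast; ring
  have hpr : (0:ℝ) < p := by linarith
  -- rewrite Zfun
  rw [Zfun_eq (m + 1) (by omega), Zfun_eq k (by omega), Zfun_eq p (by omega)]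
  have hrp := rr_pos p
  have hrk := rr_pos k
  have hrm := rr_pos (m + 1)
  have hLHS : 2 * (rr (m+1) / (8 * Real.sqrt 3)) * (rr k / (8 * Real.sqrt 3)) / (rr p / (8 * Real.sqrt 3))
      = rr (m+1) * rr k / (4 * Real.sqrt 3 * rr p) := by
    field_simp
    ring
  rw [hLHS]
  -- bounds
  have hb1 : rr (m+1) * (((m:ℝ)+1) ^ 2 * Real.sqrt ((m:ℝ)+1)) ≤ 12 ^ (m+1) := by
    have := rr_upper (m+1) hmk
    push_cast at this
    exact this
  have hb2 : rr k * 12 ^ m ≤ rr p * (1 + 5 / (2 * (k:ℝ) - 3)) ^ m := by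
    rw [hpm]; exact rr_ratio k hk2' m
  have hb3 : (1 + 5 / (2 * (k:ℝ) - 3)) ^ m ≤ Real.exp 5 := pow_le_exp5 k m hk2' hm_le
  have hrk_le : rr k ≤ rr p * Real.exp 5 / 12 ^ m := by
    rw [le_div_iff₀ (by positivity : (0:ℝ) < (12:ℝ) ^ m)]
    calc rr k * 12 ^ m ≤ rr p * (1 + 5 / (2 * (k:ℝ) - 3)) ^ m := hb2
      _ ≤ rr p * Real.exp 5 := mul_le_mul_of_nonneg_left hb3 hrp.le
  set S : ℝ := ((m:ℝ)+1) ^ 2 * Real.sqrt ((m:ℝ)+1) with hS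
  have hSpos : 0 < S := by
    apply mul_pos (by positivity)
    exact Real.sqrt_pos.mpr (by linarith)
  have hrm_le : rr (m+1) ≤ 12 ^ (m+1) / S := by
    rw [le_div_iff₀ hSpos]
    exact hb1
  -- combine
  have hmid : rr (m+1) * rr k / (4 * Real.sqrt 3 * rr p) ≤ Real.sqrt 3 * Real.exp 5 / S := by
    rw [div_le_div_iff₀ (by positivity) hSpos]
    have step : rr (m+1) * rr k * S ≤ (12 ^ (m+1) / S) * (rr p * Real.exp 5 / 12 ^ m) * S := by
      apply mul_le_mul_of_nonneg_right _ hSpos.le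
      apply mul_le_mul hrm_le hrk_le hrk.le (by positivity)
    calc rr (m+1) * rr k * S ≤ (12 ^ (m+1) / S) * (rr p * Real.exp 5 / 12 ^ m) * S := step
      _ = 12 * Real.exp 5 * rr p := by
          field_simp
          ring
      _ = Real.sqrt 3 * Real.exp 5 * (4 * Real.sqrt 3 * rr p) := by
          rw [show Real.sqrt 3 * Real.exp 5 * (4 * Real.sqrt 3 * rr p)
              = (Real.sqrt 3 * Real.sqrt 3) * (4 * Real.exp 5 * rr p) by ring,
            Real.mul_self_sqrt (by norm_num : (0:ℝ) ≤ 3)]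
          ring
  apply hmid.trans
  -- final comparison
  rw [hpkm]
  have hkm_pos : (0:ℝ) < (k:ℝ) * m := by positivity
  have hT : ((k:ℝ) * m) ^ ((5:ℝ)/2) = ((k:ℝ) * m) ^ 2 * Real.sqrt ((k:ℝ) * m) :=
    rpow_five_half _ hkm_pos
  have hP : (p:ℝ) ^ ((5:ℝ)/2) = (p:ℝ) ^ 2 * Real.sqrt p := rpow_five_half _ hpr
  rw [div_le_div_iff₀ hSpos (by rw [hT]; positivity)]
  rw [hT, hP]
  have hle : (k:ℝ) * m ≤ (p:ℝ) * ((m:ℝ)+1) := by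
    have h1 : (k:ℝ) * m ≤ (p:ℝ) * m :=
      mul_le_mul_of_nonneg_right hkp (by linarith)
    have h2 : (p:ℝ) * m ≤ (p:ℝ) * ((m:ℝ)+1) :=
      mul_le_mul_of_nonneg_left (by linarith) hpr.le
    linarith
  have hkm_nonneg : (0:ℝ) ≤ (k:ℝ) * m := hkm_pos.le
  have hsq : ((k:ℝ) * m) ^ 2 ≤ ((p:ℝ) * ((m:ℝ)+1)) ^ 2 :=
    pow_le_pow_left₀ hkm_nonneg hle 2
  have hsqrt : Real.sqrt ((k:ℝ) * m) ≤ Real.sqrt ((p:ℝ)) * Real.sqrt ((m:ℝ)+1) := by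
    rw [← Real.sqrt_mul hpr.le]
    exact Real.sqrt_le_sqrt hle
  have hC : (0:ℝ) ≤ Real.sqrt 3 * Real.exp 5 := by positivity
  have main : ((k:ℝ) * m) ^ 2 * Real.sqrt ((k:ℝ) * m)
      ≤ (p:ℝ) ^ 2 * Real.sqrt p * S := by
    calc ((k:ℝ) * m) ^ 2 * Real.sqrt ((k:ℝ) * m)
        ≤ ((p:ℝ) * ((m:ℝ)+1)) ^ 2 * (Real.sqrt p * Real.sqrt ((m:ℝ)+1)) := by
          apply mul_le_mul hsq hsqrt (Real.sqrt_nonneg _) (by positivity)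
      _ = (p:ℝ) ^ 2 * Real.sqrt p * S := by rw [hS]; ring
  calc Real.sqrt 3 * Real.exp 5 * (((k:ℝ) * m) ^ 2 * Real.sqrt ((k:ℝ) * m))
      ≤ Real.sqrt 3 * Real.exp 5 * ((p:ℝ) ^ 2 * Real.sqrt p * S) :=
        mul_le_mul_of_nonneg_left main hC
    _ = Real.sqrt 3 * Real.exp 5 * ((p:ℝ) ^ 2 * Real.sqrt p) * S := by ring
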